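/- Suppose the ellipsoid ε(P) is invariant for the perturbed error system, i.e., for every disturbance ω and every solution e of the perturbed error system with e(0)^⊤ P e(0) ≤ 1, one has e(t)^⊤ P e(t) ≤ 1 for all t ≥ 0. Then for all vectors x ∈ ℝ^{nN} and w ∈ ℝ^p with w^⊤ Q w ≤ x^⊤ P x, the following inequality holds: x^⊤ (P M + M^⊤ P) x + 2 x^⊤ P F w ≤ 0. -/

import Mathlib

open Matrix
open scoped Kronecker

/-!
Start the system on the boundary of `ε(P)` at `x / r`, where `r² = xᵀ P x`, and drive it by the
constant disturbance `w / r`, which is admissible because `wᵀ Q w ≤ xᵀ P x`. Invariance keeps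
`V(e) = eᵀ P e` at most `1 = V(e(0))` for `t ≥ 0`, so the derivative of `V ∘ e` at `0` is
nonpositive; that derivative is the left-hand side divided by `r²`.
-/

open NormedSpace in
/-- Augmenting `E` by a coordinate that stays equal to `1` turns the affine equation into a linear
one, solved by the exponential. -/
theorem exists_hasDerivAt_clm_add_const {E : Type*} [NormedAddCommGroup E] [NormedSpace ℝ E]
    [CompleteSpace E] (L : E →L[ℝ] E) (c x₀ : E) :
    ∃ e : ℝ → E, e 0 = x₀ ∧ ∀ t, HasDerivAt e (L (e t) + c) t := by
  set L' : E × ℝ →L[ℝ] E × ℝ :=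
    (L.comp (.fst ℝ E ℝ) + (ContinuousLinearMap.snd ℝ E ℝ).smulRight c).prod 0
  have hL' : ∀ y, L' y = (L y.1 + y.2 • c, 0) := fun y => rfl
  set z : ℝ → E × ℝ := fun t => exp (t • L') (x₀, 1)
  have hz : ∀ t, HasDerivAt z (L' (z t)) t := fun t => by
    simpa using (hasDerivAt_exp_smul_const' L' t).clm_apply (hasDerivAt_const t (x₀, (1 : ℝ)))
  have hsnd : ∀ t, (z t).2 = 1 := by
    intro t
    have hderiv : ∀ u, HasDerivAt (fun s => (z s).2) 0 u := fun u => by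
      have h := hasFDerivAt_snd.comp_hasDerivAt u (hz u)
      rwa [hL'] at h
    rw [is_const_of_deriv_eq_zero (fun u => (hderiv u).differentiableAt)
      (fun u => (hderiv u).deriv) t 0]
    simp [z]
  refine ⟨fun t => (z t).1, by simp [z], fun t => ?_⟩
  have h := hasFDerivAt_fst.comp_hasDerivAt t (hz t)
  rwa [hL', hsnd t, one_smul] at h

theorem nonpos_of_hasDerivAt_of_isMaxOn_Ici {V : ℝ → ℝ} {d a : ℝ} (hV : HasDerivAt V d a)
    (hmax : IsMaxOn V (Set.Ici a) a) : d ≤ 0 := by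
  have h := hmax.localize.hasFDerivWithinAt_nonpos hV.hasDerivWithinAt.hasFDerivWithinAt
    (y := 1) (mem_posTangentConeAt_of_segment_subset ?_)
  · simpa using h
  · exact (segment_eq_Icc (by linarith)).trans_subset Set.Icc_subset_Ici_self

section

variable {ι κ : Type*} [Fintype ι] [Fintype κ]

theorem Matrix.exists_hasDerivAt_mulVec_add_const (M : Matrix ι ι ℝ) (c x₀ : ι → ℝ) :
    ∃ e : ℝ → ι → ℝ, e 0 = x₀ ∧ ∀ t, HasDerivAt e (M *ᵥ e t + c) t := by
  simpa using exists_hasDerivAt_clm_add_const M.mulVecLin.toContinuousLinearMap c x₀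

theorem HasDerivAt.dotProduct {f g : ℝ → ι → ℝ} {f' g' : ι → ℝ} {t : ℝ}
    (hf : HasDerivAt f f' t) (hg : HasDerivAt g g' t) :
    HasDerivAt (fun u => f u ⬝ᵥ g u) (f' ⬝ᵥ g t + f t ⬝ᵥ g') t := by
  have h := HasDerivAt.fun_sum (u := Finset.univ)
    fun i _ => (hasDerivAt_pi.1 hf i).mul (hasDerivAt_pi.1 hg i)
  rwa [Finset.sum_add_distrib] at h

theorem HasDerivAt.mulVec {e : ℝ → ι → ℝ} {v : ι → ℝ} {t : ℝ} (A : Matrix κ ι ℝ)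
    (he : HasDerivAt e v t) : HasDerivAt (fun u => A *ᵥ e u) (A *ᵥ v) t :=
  A.mulVecLin.toContinuousLinearMap.hasFDerivAt.comp_hasDerivAt (f := e) t he

def lyapunovRate (P M : Matrix ι ι ℝ) (F : Matrix ι κ ℝ) (x : ι → ℝ) (w : κ → ℝ) : ℝ :=
  x ⬝ᵥ ((P * M + Mᵀ * P) *ᵥ x) + 2 * (x ⬝ᵥ ((P * F) *ᵥ w))

theorem Matrix.IsSymm.lyapunovRate_eq {P : Matrix ι ι ℝ} (hP : P.IsSymm)
    (M : Matrix ι ι ℝ) (F : Matrix ι κ ℝ) (x : ι → ℝ) (w : κ → ℝ) :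
    lyapunovRate P M F x w
      = (M *ᵥ x + F *ᵥ w) ⬝ᵥ (P *ᵥ x) + x ⬝ᵥ (P *ᵥ (M *ᵥ x + F *ᵥ w)) := by
  have hsymm : ∀ y, y ⬝ᵥ (P *ᵥ x) = x ⬝ᵥ (P *ᵥ y) := fun y => by
    rw [dotProduct_mulVec, ← mulVec_transpose, hP.eq, dotProduct_comm]
  rw [lyapunovRate, hsymm, add_mulVec, mulVec_add, ← mulVec_mulVec, ← mulVec_mulVec,
    ← mulVec_mulVec, dotProduct_add, dotProduct_add, dotProduct_mulVec x Mᵀ, vecMul_transpose,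
    hsymm]
  ring

theorem smul_dotProduct_mulVec_smul (A : Matrix ι κ ℝ) (a b : ℝ) (x : ι → ℝ) (y : κ → ℝ) :
    (a • x) ⬝ᵥ (A *ᵥ (b • y)) = a * b * (x ⬝ᵥ (A *ᵥ y)) := by
  rw [mulVec_smul, smul_dotProduct, dotProduct_smul, smul_eq_mul, smul_eq_mul, mul_assoc]

theorem lyapunovRate_smul (P M : Matrix ι ι ℝ) (F : Matrix ι κ ℝ) (c : ℝ) (x : ι → ℝ)
    (w : κ → ℝ) : lyapunovRate P M F (c • x) (c • w) = c * c * lyapunovRate P M F x w := by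
  simp only [lyapunovRate, smul_dotProduct_mulVec_smul]
  ring

def IsInvariantEllipsoid (M : Matrix ι ι ℝ) (F : Matrix ι κ ℝ) (P : Matrix ι ι ℝ)
    (Q : Matrix κ κ ℝ) : Prop :=
  ∀ ω : ℝ → κ → ℝ, (∀ t : ℝ, 0 ≤ t → ω t ⬝ᵥ (Q *ᵥ ω t) ≤ 1) →
    ∀ e : ℝ → ι → ℝ, (∀ t : ℝ, 0 ≤ t → HasDerivAt e (M *ᵥ e t + F *ᵥ ω t) t) →
      e 0 ⬝ᵥ (P *ᵥ e 0) ≤ 1 → ∀ t : ℝ, 0 ≤ t → e t ⬝ᵥ (P *ᵥ e t) ≤ 1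

theorem IsInvariantEllipsoid.lyapunovRate_nonpos_of_dotProduct_mulVec_eq_one
    {M P : Matrix ι ι ℝ} {F : Matrix ι κ ℝ} {Q : Matrix κ κ ℝ}
    (hinv : IsInvariantEllipsoid M F P Q) (hP : P.IsSymm) {x : ι → ℝ} {w : κ → ℝ}
    (hx : x ⬝ᵥ (P *ᵥ x) = 1) (hw : w ⬝ᵥ (Q *ᵥ w) ≤ 1) : lyapunovRate P M F x w ≤ 0 := by
  obtain ⟨e, he0, he⟩ := M.exists_hasDerivAt_mulVec_add_const (F *ᵥ w) x
  have hV := (he 0).dotProduct ((he 0).mulVec P)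
  rw [he0, ← hP.lyapunovRate_eq] at hV
  refine nonpos_of_hasDerivAt_of_isMaxOn_Ici hV fun t ht => ?_
  have hinside := hinv (fun _ => w) (fun _ _ => hw) e (fun t _ => he t) (by rw [he0, hx]) t ht
  simpa [he0, hx] using hinside

end

theorem invariance_implies_directional_inequality_general (n N p : ℕ)
    (Q : Matrix (Fin p) (Fin p) ℝ)
    (P : Matrix (Fin N × Fin n) (Fin N × Fin n) ℝ) (hP : P.PosDef)
    (M : Matrix (Fin N × Fin n) (Fin N × Fin n) ℝ)
    (F : Matrix (Fin N × Fin n) (Fin p) ℝ)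
    (hinv : ∀ ω : ℝ → (Fin p → ℝ), (∀ t : ℝ, 0 ≤ t → ω t ⬝ᵥ (Q *ᵥ ω t) ≤ 1) →
      ∀ e : ℝ → (Fin N × Fin n → ℝ),
        (∀ t : ℝ, 0 ≤ t → HasDerivAt e (M *ᵥ e t + F *ᵥ ω t) t) →
        e 0 ⬝ᵥ (P *ᵥ e 0) ≤ 1 →
        ∀ t : ℝ, 0 ≤ t → e t ⬝ᵥ (P *ᵥ e t) ≤ 1) :
    ∀ (x : Fin N × Fin n → ℝ) (w : Fin p → ℝ),
      w ⬝ᵥ (Q *ᵥ w) ≤ x ⬝ᵥ (P *ᵥ x) →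
      x ⬝ᵥ ((P * M + Mᵀ * P) *ᵥ x) + 2 * (x ⬝ᵥ ((P * F) *ᵥ w)) ≤ 0 := by
  intro x w hle
  change lyapunovRate P M F x w ≤ 0
  rcases eq_or_ne x 0 with rfl | hx
  · simp [lyapunovRate]
  have hs : 0 < x ⬝ᵥ (P *ᵥ x) := by simpa using hP.dotProduct_mulVec_pos hx
  set r := √(x ⬝ᵥ (P *ᵥ x))
  have hr : 0 < r := Real.sqrt_pos.2 hs
  have hr2 : r * r = x ⬝ᵥ (P *ᵥ x) := Real.mul_self_sqrt hs.le
  have hPsymm : P.IsSymm := by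
    unfold IsSymm; simpa [IsHermitian] using hP.isHermitian
  have hunit := IsInvariantEllipsoid.lyapunovRate_nonpos_of_dotProduct_mulVec_eq_one hinv hPsymm
    (x := r⁻¹ • x) (w := r⁻¹ • w)
    (by rw [smul_dotProduct_mulVec_smul, ← hr2]; field_simp)
    (by rw [smul_dotProduct_mulVec_smul, ← mul_inv, inv_mul_le_one₀ (by positivity), hr2]
        exact hle)
  rw [lyapunovRate_smul] at hunit
  exact nonpos_of_mul_nonpos_right hunit (by positivity)

/-- If the ellipsoid `ε(P)` is invariant for the perturbed error
system `e' = M e + F ω`, then for all `x, w` with `wᵀ Q w ≤ xᵀ P x` we have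
`xᵀ (P M + Mᵀ P) x + 2 xᵀ P F w ≤ 0`. -/
theorem invariance_implies_directional_inequality (n m N p : ℕ)
    (A : Matrix (Fin n) (Fin n) ℝ) (B : Matrix (Fin n) (Fin m) ℝ)
    (K : Matrix (Fin m) (Fin n) ℝ) (Ltil : Matrix (Fin N) (Fin N) ℝ)
    (E : Matrix (Fin n) (Fin p) ℝ)
    (Q : Matrix (Fin p) (Fin p) ℝ) (hQ : Q.PosDef)
    (P : Matrix (Fin N × Fin n) (Fin N × Fin n) ℝ) (hP : P.PosDef)
    (M : Matrix (Fin N × Fin n) (Fin N × Fin n) ℝ)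
    (hM : M = (1 : Matrix (Fin N) (Fin N) ℝ) ⊗ₖ A - Ltil ⊗ₖ (B * K))
    (F : Matrix (Fin N × Fin n) (Fin p) ℝ)
    (hF : ∀ (ij : Fin N × Fin n) (k : Fin p), F ij k = E ij.2 k)
    (hinv : ∀ ω : ℝ → (Fin p → ℝ), (∀ t : ℝ, 0 ≤ t → ω t ⬝ᵥ (Q *ᵥ ω t) ≤ 1) →
      ∀ e : ℝ → (Fin N × Fin n → ℝ),
        (∀ t : ℝ, 0 ≤ t → HasDerivAt e (M *ᵥ e t + F *ᵥ ω t) t) →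
        e 0 ⬝ᵥ (P *ᵥ e 0) ≤ 1 →
        ∀ t : ℝ, 0 ≤ t → e t ⬝ᵥ (P *ᵥ e t) ≤ 1) :
    ∀ (x : Fin N × Fin n → ℝ) (w : Fin p → ℝ),
      w ⬝ᵥ (Q *ᵥ w) ≤ x ⬝ᵥ (P *ᵥ x) →
      x ⬝ᵥ ((P * M + Mᵀ * P) *ᵥ x) + 2 * (x ⬝ᵥ ((P * F) *ᵥ w)) ≤ 0 :=
  invariance_implies_directional_inequality_general n N p Q P hP M F hinv
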